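/- arXiv:1205.5256 — 3 statements merged into one kernel-verified Lean document; each statement's English description precedes it below -/
import Mathlib

section
/- If a closed lattice stick conformation K has at least b local maxima of the z-coordinate function along the curve, then K contains at least 2b z-sticks; consequently, if K has at least b local maxima in each of the three coordinate directions, K has at least 6b sticks. -/
namespace CLS

/-- Lattice points on the axis-parallel segment from `a` to `b`. -/
def Seg (a b : Fin 3 → ℤ) : Set (Fin 3 → ℤ) :=
  {p | ∀ k, min (a k) (b k) ≤ p k ∧ p k ≤ max (a k) (b k)}

/-- A closed cubic-lattice stick conformation with `m` sticks: a cyclic sequence of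
integer vertices, consecutive vertices differing in exactly one coordinate (so each
edge is an axis-parallel stick), consecutive sticks perpendicular (so each edge is a
maximal segment), forming a simple closed curve. -/
structure Conf (m : ℕ) where
  v : ZMod m → Fin 3 → ℤ
  three_le : 3 ≤ m
  axis : ∀ i : ZMod m, ∃! k : Fin 3, v (i + 1) k ≠ v i k
  perp : ∀ (i : ZMod m) (k : Fin 3), v (i + 1) k ≠ v i k → v (i + 2) k = v (i + 1) k
  simple : ∀ i j : ZMod m, i ≠ j →
    ∀ p ∈ Seg (v i) (v (i + 1)) ∩ Seg (v j) (v (j + 1)),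
      (j = i + 1 ∧ p = v j) ∨ (i = j + 1 ∧ p = v i)

/-- The number of sticks of `C` parallel to the `k`-th coordinate axis. -/
noncomputable def sticks {m : ℕ} (C : Conf m) (k : Fin 3) : ℕ :=
  Nat.card {i : ZMod m // C.v (i + 1) k ≠ C.v i k}

/-- The conformation lies entirely in some (affine) plane. -/
def Planar {m : ℕ} (C : Conf m) : Prop :=
  ∃ (a : Fin 3 → ℝ) (c : ℝ), a ≠ 0 ∧ ∀ i, (∑ k, a k * (C.v i k : ℝ)) = c

/-- `i` is the start of a maximal subarc of `C` on which the `k`-th coordinate is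
constant and which is a local maximum of the `k`-th coordinate along the curve. -/
def MaxStart {m : ℕ} (C : Conf m) (k : Fin 3) (i : ZMod m) : Prop :=
  C.v (i - 1) k < C.v i k ∧
  ∃ n : ℕ, (∀ t : ℕ, t ≤ n → C.v (i + (t : ZMod m)) k = C.v i k) ∧
    C.v (i + (n : ZMod m) + 1) k < C.v i k

lemma key {m : ℕ} (C : Conf m) (k : Fin 3) (b : ℕ)
    (h : ∃ S : Set (ZMod m), b ≤ S.ncard ∧ ∀ i ∈ S, MaxStart C k i) :
    2 * b ≤ sticks C k := by
  classical
  haveI : NeZero m := ⟨by have := C.three_le; omega⟩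
  obtain ⟨S, hb, hS⟩ := h
  set N : ZMod m → ℕ := fun i => if h : ∃ n : ℕ,
      (∀ t : ℕ, t ≤ n → C.v (i + (t : ZMod m)) k = C.v i k) ∧
      C.v (i + (n : ZMod m) + 1) k < C.v i k then h.choose else 0 with hN
  have hprop : ∀ i ∈ S, (∀ t : ℕ, t ≤ N i → C.v (i + (t : ZMod m)) k = C.v i k) ∧
      C.v (i + (N i : ZMod m) + 1) k < C.v i k := by
    intro i hi
    have h' := (hS i hi).2
    simp only [hN, dif_pos h']
    exact h'.choose_spec
  have hup : ∀ i ∈ S, C.v (i - 1) k < C.v i k := fun i hi => (hS i hi).1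
  have hcast : ((m - 1 : ℕ) : ZMod m) = -1 := by
    have h3 := C.three_le
    rw [Nat.cast_sub (by omega), ZMod.natCast_self]
    ring
  have hNlt : ∀ i ∈ S, N i < m - 1 := by
    intro i hi
    by_contra hge
    push_neg at hge
    have h1 := (hprop i hi).1 (m - 1) hge
    rw [hcast] at h1
    have h2 := hup i hi
    rw [sub_eq_add_neg] at h2
    omega
  have hdownaux : ∀ i ∈ S, ∀ j ∈ S,
      i + (N i : ZMod m) = j + (N j : ZMod m) → N j < N i → False := by
    intro i hi j hj heq hlt
    have hd1 : 1 ≤ N i - N j := by omega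
    have hd : i + ((N i - N j : ℕ) : ZMod m) = j := by
      rw [Nat.cast_sub hlt.le]
      linear_combination heq
    have hjm1 : i + ((N i - N j - 1 : ℕ) : ZMod m) = j - 1 := by
      rw [Nat.cast_sub hd1, Nat.cast_sub hlt.le]
      linear_combination heq
    have e1 : C.v j k = C.v i k := by
      rw [← hd]; exact (hprop i hi).1 _ (by omega)
    have e2 : C.v (j - 1) k = C.v i k := by
      rw [← hjm1]; exact (hprop i hi).1 _ (by omega)
    have := hup j hj
    omega
  have hdowninj : ∀ i ∈ S, ∀ j ∈ S,
      i + (N i : ZMod m) = j + (N j : ZMod m) → i = j := by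
    intro i hi j hj heq
    rcases lt_trichotomy (N i) (N j) with h | h | h
    · exact absurd (hdownaux j hj i hi heq.symm h) not_false
    · rw [h] at heq; exact add_right_cancel heq
    · exact absurd (hdownaux i hi j hj heq h) not_false
  set T : Set (ZMod m) := {i | C.v (i + 1) k ≠ C.v i k} with hT
  set A : Set (ZMod m) := (fun i => i - 1) '' S with hA
  set B : Set (ZMod m) := (fun i => i + (N i : ZMod m)) '' S with hB
  have hAT : A ⊆ T := by
    rintro _ ⟨i, hi, rfl⟩
    have h1 := hup i hi
    simp only [hT, Set.mem_setOf_eq, sub_add_cancel]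
    omega
  have hBT : B ⊆ T := by
    rintro _ ⟨i, hi, rfl⟩
    have h1 := (hprop i hi).1 (N i) le_rfl
    have h2 := (hprop i hi).2
    simp only [hT, Set.mem_setOf_eq]
    omega
  have hAB : Disjoint A B := by
    rw [Set.disjoint_left]
    rintro _ ⟨i, hi, rfl⟩ ⟨j, hj, hji⟩
    simp only at hji
    have hij := hup i hi
    have h1 := (hprop j hj).1 (N j) le_rfl
    have h2 := (hprop j hj).2
    rw [hji, sub_add_cancel] at h2
    rw [hji] at h1
    omega
  have hcardA : A.ncard = S.ncard := by
    apply Set.ncard_image_of_injective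
    intro a b hab
    have := congrArg (· + 1) hab
    simpa using this
  have hcardB : B.ncard = S.ncard :=
    Set.ncard_image_of_injOn (fun i hi j hj hij => hdowninj i hi j hj hij)
  have hunion : A.ncard + B.ncard ≤ T.ncard := by
    rw [← Set.ncard_union_eq hAB (Set.toFinite A) (Set.toFinite B)]
    exact Set.ncard_le_ncard (Set.union_subset hAT hBT) (Set.toFinite T)
  have hsticks : sticks C k = T.ncard := (Nat.card_coe_set_eq T).symm ▸ rfl
  omega

lemma sum_sticks {m : ℕ} (C : Conf m) :
    sticks C 0 + sticks C 1 + sticks C 2 = m := by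
  classical
  haveI : NeZero m := ⟨by have := C.three_le; omega⟩
  set f : ZMod m → Fin 3 := fun i => (C.axis i).choose with hf
  have hiff : ∀ (i : ZMod m) (k : Fin 3), (C.v (i + 1) k ≠ C.v i k) ↔ f i = k := by
    intro i k
    constructor
    · intro h; exact ((C.axis i).choose_spec.2 k h).symm
    · intro h; rw [← h]; exact (C.axis i).choose_spec.1
  have hst : ∀ k, sticks C k = (Finset.univ.filter (fun i => f i = k)).card := by
    intro k
    rw [sticks, Nat.card_eq_fintype_card, Fintype.card_subtype]
    congr 1
    apply Finset.filter_congr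
    intro i _
    exact hiff i k
  have hsum : (Finset.univ : Finset (ZMod m)).card =
      ∑ k : Fin 3, (Finset.univ.filter (fun i => f i = k)).card :=
    Finset.card_eq_sum_card_fiberwise (fun i _ => Finset.mem_univ (f i))
  have hcard : (Finset.univ : Finset (ZMod m)).card = m := by
    rw [Finset.card_univ, ZMod.card]
  rw [hst 0, hst 1, hst 2]
  rw [Fin.sum_univ_three] at hsum
  omega

/-- if `C` has at least `b` local maxima in the `z`-direction then it
has at least `2*b` z-sticks; if it has at least `b` local maxima in each of the
three coordinate directions, it has at least `6*b` sticks. -/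
theorem localMax_sticks {m : ℕ} (C : Conf m) (b : ℕ) :
    ((∃ S : Set (ZMod m), b ≤ S.ncard ∧ ∀ i ∈ S, MaxStart C 2 i) →
      2 * b ≤ sticks C 2) ∧
    ((∀ k : Fin 3, ∃ S : Set (ZMod m), b ≤ S.ncard ∧ ∀ i ∈ S, MaxStart C k i) →
      6 * b ≤ m) := by
  constructor
  · exact key C 2 b
  · intro h
    have h0 := key C 0 b (h 0)
    have h1 := key C 1 b (h 1)
    have h2 := key C 2 b (h 2)
    have := sum_sticks C
    omega

end CLS
end

section
/- Let K be a nontrivial knot type with bridge index b[K], and let s_CL[K] be its cubic lattice stick index. Then s_CL[K] ≥ 6·b[K]. -/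
namespace CLS

/-- If a plateau (constant run of length `a` starting at `i`) ends at the same place
as another plateau-start `i'` shifted by `b ≤ a`, and `i'` is preceded by a strictly
smaller value, then `i = i'`. -/
lemma plateau_start_eq {m : ℕ} (C : Conf m) (k : Fin 3) {i i' : ZMod m} {a b : ℕ}
    (hlt : C.v (i' - 1) k < C.v i' k)
    (hconst : ∀ t : ℕ, t ≤ a → C.v (i + (t : ZMod m)) k = C.v i k)
    (hle : b ≤ a) (heq : i + (a : ZMod m) = i' + (b : ZMod m)) : i = i' := by
  have h1 : i + (a : ZMod m) - b = i' := by rw [heq]; ring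
  have hi' : i' = i + ((a - b : ℕ) : ZMod m) := by
    rw [Nat.cast_sub hle, ← h1]; ring
  rcases Nat.eq_zero_or_pos (a - b) with h0 | hpos
  · rw [h0] at hi'; simpa using hi'.symm
  · exfalso
    have hv1 : C.v i' k = C.v i k := by rw [hi']; exact hconst _ (Nat.sub_le a b)
    have h2 : i' - 1 = i + ((a - b - 1 : ℕ) : ZMod m) := by
      rw [Nat.cast_sub hpos, hi']; push_cast; ring
    have hv2 : C.v (i' - 1) k = C.v i k := by
      rw [h2]; exact hconst _ (by omega)
    omega

/-- for a nontrivial knot type `K` (every lattice conformation of it is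
non-planar), whose bridge index forces at least `bridge K` local maxima in each
coordinate direction on every lattice conformation, the cubic lattice stick index
(the least number of sticks of a lattice conformation of `K`) is at least
`6 * bridge K`. -/
theorem sCL_ge_six_bridge (Knot : Type) (IsConfOf : ∀ {m : ℕ}, Conf m → Knot → Prop)
    (bridge : Knot → ℕ) (K : Knot)
    (hnontrivial : ∀ {m : ℕ} (C : Conf m), IsConfOf C K → ¬ Planar C)
    (hexists : ∃ (m : ℕ) (C : Conf m), IsConfOf C K)
    (hbridge : ∀ {m : ℕ} (C : Conf m), IsConfOf C K → ∀ k : Fin 3,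
      ∃ S : Set (ZMod m), bridge K ≤ S.ncard ∧ ∀ i ∈ S, MaxStart C k i) :
    6 * bridge K ≤ sInf {m | ∃ C : Conf m, IsConfOf C K} := by
  classical
  have hne : {m | ∃ C : Conf m, IsConfOf C K}.Nonempty := by
    obtain ⟨m0, C0, hC0⟩ := hexists
    exact ⟨m0, C0, hC0⟩
  set m := sInf {m | ∃ C : Conf m, IsConfOf C K} with hm
  obtain ⟨C, hC⟩ := Nat.sInf_mem hne
  have h3 : 3 ≤ m := C.three_le
  haveI : NeZero m := ⟨by omega⟩
  -- each direction has at least 2 * bridge K sticks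
  have key : ∀ k : Fin 3, 2 * bridge K ≤ sticks C k := by
    intro k
    obtain ⟨S, hcard, hmax⟩ := hbridge C hC k
    choose n hn1 hn2 using fun (i : ZMod m) (hi : i ∈ S) => (hmax i hi).2
    -- two sticks per maximum
    have asc : ∀ (i : ZMod m), i ∈ S → C.v (i - 1 + 1) k ≠ C.v (i - 1) k := by
      intro i hi
      have h := (hmax i hi).1
      have : i - 1 + 1 = i := by ring
      rw [this]; exact h.ne'
    have desc : ∀ (i : ZMod m) (hi : i ∈ S),
        C.v (i + (n i hi : ZMod m) + 1) k ≠ C.v (i + (n i hi : ZMod m)) k := by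
      intro i hi
      have h1 := hn2 i hi
      have h2 : C.v (i + (n i hi : ZMod m)) k = C.v i k := hn1 i hi _ le_rfl
      omega
    let Φ : S × Bool → {j : ZMod m // C.v (j + 1) k ≠ C.v j k} := fun p =>
      if hb : p.2 = true then ⟨p.1.1 + (n p.1.1 p.1.2 : ZMod m), desc p.1.1 p.1.2⟩
      else ⟨p.1.1 - 1, asc p.1.1 p.1.2⟩
    have hΦ : Function.Injective Φ := by
      rintro ⟨⟨i, hi⟩, b⟩ ⟨⟨i', hi'⟩, b'⟩ heq
      simp only [Φ] at heq
      cases b <;> cases b' <;> simp only [dite_true, dite_false,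
        Bool.false_eq_true, Bool.true_eq_false, Subtype.mk.injEq] at heq
      · -- both ascending
        have : i = i' := by
          have := heq
          have h := sub_left_injective (G := ZMod m) heq
          exact h
        subst this
        rfl
      · -- ascending vs descending: contradiction via sign
        exfalso
        have ha : C.v (i - 1) k < C.v (i - 1 + 1) k := by
          have hsi : i - 1 + 1 = i := by ring
          rw [hsi]; exact (hmax i hi).1
        have hd : C.v (i' + (n i' hi' : ZMod m) + 1) k < C.v (i' + (n i' hi' : ZMod m)) k := by
          have h1 := hn2 i' hi'
          have h2 : C.v (i' + (n i' hi' : ZMod m)) k = C.v i' k := hn1 i' hi' _ le_rfl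
          omega
        rw [heq] at ha
        omega
      · -- descending vs ascending
        exfalso
        have ha : C.v (i' - 1) k < C.v (i' - 1 + 1) k := by
          have hsi : i' - 1 + 1 = i' := by ring
          rw [hsi]; exact (hmax i' hi').1
        have hd : C.v (i + (n i hi : ZMod m) + 1) k < C.v (i + (n i hi : ZMod m)) k := by
          have h1 := hn2 i hi
          have h2 : C.v (i + (n i hi : ZMod m)) k = C.v i k := hn1 i hi _ le_rfl
          omega
        rw [← heq] at ha
        omega
      · -- both descending
        have : i = i' := by
          rcases le_total (n i' hi') (n i hi) with hle | hle
          · exact plateau_start_eq C k (hmax i' hi').1 (hn1 i hi) hle heq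
          · exact (plateau_start_eq C k (hmax i hi).1 (hn1 i' hi') hle heq.symm).symm
        subst this
        rfl
    haveI : Finite {j : ZMod m // C.v (j + 1) k ≠ C.v j k} := Subtype.finite
    have hle2 : Nat.card (S × Bool) ≤ sticks C k := by
      rw [sticks]
      exact Nat.card_le_card_of_injective Φ hΦ
    have hprod : Nat.card (S × Bool) = S.ncard * 2 := by
      rw [Nat.card_prod, Nat.card_coe_set_eq]
      simp [Nat.card_eq_fintype_card]
    omega
  -- the sticks partition into the three directions
  let f : ZMod m → Fin 3 := fun i => (C.axis i).choose
  have hf : ∀ (i : ZMod m) (k : Fin 3), C.v (i + 1) k ≠ C.v i k ↔ f i = k := by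
    intro i k
    constructor
    · intro h
      exact ((C.axis i).choose_spec.2 k h).symm
    · rintro rfl
      exact (C.axis i).choose_spec.1
  have hsticks : ∀ k : Fin 3, sticks C k = (Finset.univ.filter fun i => f i = k).card := by
    intro k
    rw [sticks, Nat.card_eq_fintype_card, Fintype.card_subtype]
    congr 1
    ext i
    simp [hf i k]
  have hsum : ∑ k : Fin 3, sticks C k = m := by
    have := Finset.card_eq_sum_card_fiberwise
      (f := f) (s := Finset.univ) (t := Finset.univ) (fun x _ => Finset.mem_univ (f x))
    rw [Finset.card_univ, ZMod.card m] at this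
    calc ∑ k : Fin 3, sticks C k
        = ∑ k : Fin 3, (Finset.univ.filter fun i => f i = k).card :=
          Finset.sum_congr rfl fun k _ => hsticks k
      _ = m := this.symm
  calc 6 * bridge K = ∑ _k : Fin 3, 2 * bridge K := by simp; ring
    _ ≤ ∑ k : Fin 3, sticks C k := Finset.sum_le_sum fun k _ => key k
    _ = m := hsum

end CLS
end

section
/- If J is a knot with s_CL[J] = 6·b[J], and K is an n-string braid satellite of J whose bridge index satisfies b[K] ≥ n·b[J] (Schubert), and K admits a lattice conformation with 6n·b[J] sticks, then s_CL[K] = 6n·b[J]. -/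
namespace CLS

/-- if `J` satisfies `s_CL[J] = 6 b[J]`, and `K` is an `n`-string
braid satellite of `J` with `b[K] ≥ n·b[J]` (Schubert), whose lattice stick index
satisfies the lower bound `s_CL[K] ≥ 6 b[K]`, and `K` admits a lattice conformation
with `6 n b[J]` sticks, then `s_CL[K] = 6 n b[J]`. -/
theorem satellite_sCL (Knot : Type) (IsConfOf : ∀ {m : ℕ}, Conf m → Knot → Prop)
    (bridge sCL : Knot → ℕ)
    (hsCL : ∀ K : Knot, sCL K = sInf {m | ∃ C : Conf m, IsConfOf C K})
    (J K : Knot) (n : ℕ)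
    (hJ : sCL J = 6 * bridge J)
    (hSchubert : n * bridge J ≤ bridge K)
    (hlow : 6 * bridge K ≤ sCL K)
    (hwit : ∃ C : Conf (6 * n * bridge J), IsConfOf C K) :
    sCL K = 6 * n * bridge J := by
  have h1 : sCL K ≤ 6 * n * bridge J := by
    rw [hsCL]
    exact Nat.sInf_le hwit
  have h2 : 6 * n * bridge J ≤ sCL K := by
    calc 6 * n * bridge J = 6 * (n * bridge J) := by ring
    _ ≤ 6 * bridge K := by exact Nat.mul_le_mul_left 6 hSchubert
    _ ≤ sCL K := hlow
  omega

end CLS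
end
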